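/- arXiv:1310.2834 — 8 statements merged into one kernel-verified Lean document; each statement's English description precedes it below -/
import Mathlib

section
/- For any real numbers 0 < p ≤ q and any finite doubly-indexed family of complex numbers (c_{i,j}), one has (∑_i (∑_j |c_{i,j}|^p)^{q/p})^{1/q} ≤ (∑_j (∑_i |c_{i,j}|^q)^{p/q})^{1/p}. -/
/-! Raising to the power `p` turns the claim into Minkowski's inequality in `ℓ^(q/p)`, applied to
the columns `i ↦ |c i j| ^ p` of the matrix; `q / p ≥ 1` is exactly what makes it available. -/

open Finset

namespace NNReal

theorem Lp_sum_le {ι κ : Type*} (s : Finset ι) (t : Finset κ) (f : κ → ι → ℝ≥0) {r : ℝ}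
    (hr : 1 ≤ r) :
    (∑ i ∈ s, (∑ j ∈ t, f j i) ^ r) ^ (1 / r) ≤ ∑ j ∈ t, (∑ i ∈ s, f j i ^ r) ^ (1 / r) := by
  have hr₀ : r ≠ 0 := by positivity
  simpa only [Finset.sum_apply] using
    Finset.le_sum_of_subadditive (fun v : ι → ℝ≥0 => (∑ i ∈ s, v i ^ r) ^ (1 / r))
      (by simp [zero_rpow hr₀, hr₀]) (fun v w => Lp_add_le s v w hr) t f

theorem mixed_norm_le {ι κ : Type*} (s : Finset ι) (t : Finset κ) (a : ι → κ → ℝ≥0) {p q : ℝ}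
    (hp : 0 < p) (hpq : p ≤ q) :
    (∑ i ∈ s, (∑ j ∈ t, a i j ^ p) ^ (q / p)) ^ (1 / q) ≤
      (∑ j ∈ t, (∑ i ∈ s, a i j ^ q) ^ (p / q)) ^ (1 / p) := by
  have hq : 0 < q := hp.trans_le hpq
  have hminkowski := Lp_sum_le s t (fun j i => a i j ^ p) ((one_le_div hp).2 hpq)
  have hpow : ∀ x : ℝ≥0, (x ^ p) ^ (q / p) = x ^ q := fun x => by
    rw [← rpow_mul, mul_div_cancel₀ q hp.ne']
  simp only [hpow, one_div_div] at hminkowski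
  calc (∑ i ∈ s, (∑ j ∈ t, a i j ^ p) ^ (q / p)) ^ (1 / q)
      = ((∑ i ∈ s, (∑ j ∈ t, a i j ^ p) ^ (q / p)) ^ (p / q)) ^ (1 / p) := by
        rw [← rpow_mul]
        field_simp
    _ ≤ (∑ j ∈ t, (∑ i ∈ s, a i j ^ q) ^ (p / q)) ^ (1 / p) := by
        gcongr

end NNReal

theorem minkowski_mixed_norm {ι κ : Type*} [Fintype ι] [Fintype κ]
    (p q : ℝ) (hp : 0 < p) (hpq : p ≤ q) (c : ι → κ → ℂ) :
    (∑ i, (∑ j, ‖c i j‖ ^ p) ^ (q / p)) ^ (1 / q) ≤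
      (∑ j, (∑ i, ‖c i j‖ ^ q) ^ (p / q)) ^ (1 / p) := by
  simpa using NNReal.coe_le_coe.2 (NNReal.mixed_norm_le univ univ (fun i j => ‖c i j‖₊) hp hpq)
end

section
/- Let m ≥ 1, k with 1 ≤ k ≤ m, and for each subset S of {1,…,m} of cardinality k define for an index i ∈ {1,…,n}^m the mixed norm N_S(a) = (∑_{i_S} (∑_{i_{Ŝ}} |a_i|²)^{(1/2)·(2k/(k+1))})^{(k+1)/(2k)}, where i_S denotes the coordinates of i in S and Ŝ is the complement of S. Then for every family (a_i) of complex numbers indexed by {1,…,n}^m, (∑_{i} |a_i|^{2m/(m+1)})^{(m+1)/(2m)} ≤ ∏_{S ⊆ {1,…,m}, |S|=k} N_S(a)^{1/binom(m,k)}. -/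
/-- Combine an assignment of coordinates on `S` and on its complement into a
multi-index in `Fin m → Fin n`. -/
def combineIdx {m n : ℕ} (S : Finset (Fin m))
    (g : {x // x ∈ S} → Fin n) (h : {x // x ∈ Sᶜ} → Fin n) : Fin m → Fin n :=
  fun x => if hx : x ∈ S then g ⟨x, hx⟩ else h ⟨x, Finset.mem_compl.mpr hx⟩

/-!
Fix a `k`-set `S` and consider the mixed norm of `a` that sums the coordinates in their natural
order, with exponent `s = 2k/(k+1)` at the coordinates in `S` and `2` at the others. A coordinate
lies in a fraction `k/m` of the `k`-sets, so at every coordinate the reciprocal exponents average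
(with equal weights `1/binom(m,k)`) to `(k/m)·(k+1)/(2k) + (1 - k/m)/2 = (m+1)/(2m)`. Hölder's
inequality for mixed norms therefore bounds the `ℓ^{2m/(m+1)}` norm of `a` by the geometric mean
of these mixed norms. As `s ≤ 2`, Minkowski's inequality lets every `ℓ²` sum move inside past the
`ℓ^s` sums at the cost of increasing the norm, so each mixed norm is at most `N_S(a)`.
-/

open Finset NNReal
open scoped ENNReal

theorem NNReal.sum_prod_rpow_le_prod_sum_rpow {ι τ : Type*} [Fintype ι] (T : Finset τ)
    (θ : τ → ℝ) (hθ : ∑ t ∈ T, θ t = 1) (hθ0 : ∀ t ∈ T, 0 ≤ θ t) (f : τ → ι → ℝ≥0) :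
    ∑ i, ∏ t ∈ T, f t i ^ θ t ≤ ∏ t ∈ T, (∑ i, f t i) ^ θ t := by
  let _ : MeasurableSpace ι := ⊤
  have := ENNReal.lintegral_prod_norm_pow_le (μ := MeasureTheory.Measure.count) T
    (f := fun t i => (f t i : ℝ≥0∞)) (fun _ _ => .of_discrete) hθ hθ0
  simp only [MeasureTheory.lintegral_count, tsum_fintype] at this
  rw [← ENNReal.coe_le_coe]
  convert this using 1 <;> push_cast
  · exact sum_congr rfl fun i _ => prod_congr rfl fun t ht =>
      ENNReal.coe_rpow_of_nonneg _ (hθ0 t ht)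
  · exact prod_congr rfl fun t ht => by
      rw [ENNReal.coe_rpow_of_nonneg _ (hθ0 t ht)]; push_cast; rfl

noncomputable def finLpNorm {ι : Type*} [Fintype ι] (p : ℝ) (f : ι → ℝ≥0) : ℝ≥0 :=
  (∑ i, f i ^ p) ^ p⁻¹

section finLpNorm

variable {ι κ : Type*} [Fintype ι] [Fintype κ] {p : ℝ}

theorem finLpNorm_rpow (hp : p ≠ 0) (f : ι → ℝ≥0) : finLpNorm p f ^ p = ∑ i, f i ^ p :=
  rpow_inv_rpow hp _

theorem finLpNorm_unique [Unique ι] (hp : p ≠ 0) (f : ι → ℝ≥0) :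
    finLpNorm p f = f default := by
  rw [finLpNorm, Fintype.sum_unique, rpow_rpow_inv hp]

theorem finLpNorm_mono (hp : 0 < p) {f g : ι → ℝ≥0} (h : ∀ i, f i ≤ g i) :
    finLpNorm p f ≤ finLpNorm p g := by
  unfold finLpNorm
  gcongr with i
  exact h i

theorem finLpNorm_comp_equiv (e : κ ≃ ι) (f : ι → ℝ≥0) :
    finLpNorm p (fun k => f (e k)) = finLpNorm p f := by
  rw [finLpNorm, finLpNorm, e.sum_comp (fun i => f i ^ p)]

theorem finLpNorm_finLpNorm (hp : p ≠ 0) (f : ι → κ → ℝ≥0) :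
    finLpNorm p (fun i => finLpNorm p (f i)) = finLpNorm p (fun x : ι × κ => f x.1 x.2) := by
  simp only [finLpNorm, rpow_inv_rpow hp, Fintype.sum_prod_type]

theorem finLpNorm_rpow_comp {s : ℝ} (hs : s ≠ 0) (f : ι → ℝ≥0) :
    finLpNorm (p / s) (fun i => f i ^ s) = finLpNorm p f ^ s := by
  simp only [finLpNorm, ← rpow_mul]
  congr 1
  · exact sum_congr rfl fun i _ => by rw [mul_div_cancel₀ _ hs]
  · field_simp

theorem finLpNorm_sum_le {τ : Type*} (hp : 1 ≤ p) (T : Finset τ) (f : τ → ι → ℝ≥0) :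
    finLpNorm p (fun i => ∑ t ∈ T, f t i) ≤ ∑ t ∈ T, finLpNorm p (f t) := by
  induction T using Finset.cons_induction with
  | empty => simp [finLpNorm, zero_rpow (by positivity : p ≠ 0), (by positivity : p⁻¹ ≠ 0)]
  | cons t T ht ih =>
    simp only [sum_cons]
    refine le_trans ?_ (add_le_add_right ih _)
    simpa only [finLpNorm, one_div] using
      NNReal.Lp_add_le univ (f t) (fun i => ∑ t ∈ T, f t i) hp

theorem finLpNorm_finLpNorm_le_swap {s c : ℝ} (hs : 0 < s) (hsc : s ≤ c)
    (f : ι → κ → ℝ≥0) :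
    finLpNorm c (fun i => finLpNorm s (f i)) ≤
      finLpNorm s (fun k => finLpNorm c (fun i => f i k)) := by
  calc finLpNorm c (fun i => finLpNorm s (f i))
      = finLpNorm (c / s) (fun i => finLpNorm s (f i) ^ s) ^ s⁻¹ := by
        rw [finLpNorm_rpow_comp hs.ne', rpow_rpow_inv hs.ne']
    _ = finLpNorm (c / s) (fun i => ∑ k, f i k ^ s) ^ s⁻¹ := by
        simp only [finLpNorm_rpow hs.ne']
    _ ≤ (∑ k, finLpNorm (c / s) (fun i => f i k ^ s)) ^ s⁻¹ := by
        gcongr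
        exact finLpNorm_sum_le ((one_le_div hs).mpr hsc) univ (fun k i => f i k ^ s)
    _ = finLpNorm s (fun k => finLpNorm c (fun i => f i k)) := by
        simp only [finLpNorm_rpow_comp hs.ne']
        rfl

theorem finLpNorm_prod_rpow_le {τ : Type*} (T : Finset τ) {θ : τ → ℝ}
    (hθ0 : ∀ t ∈ T, 0 ≤ θ t) {p : τ → ℝ} {q : ℝ} (hp : ∀ t ∈ T, 0 < p t) (hq : 0 < q)
    (hpq : q⁻¹ = ∑ t ∈ T, θ t / p t) (f : τ → ι → ℝ≥0) :
    finLpNorm q (fun i => ∏ t ∈ T, f t i ^ θ t) ≤ ∏ t ∈ T, finLpNorm (p t) (f t) ^ θ t := by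
  -- `(∏ f^θ)^q` is the geometric mean of the `f^p` with weights `w`, and `∑ w = 1` by `hpq`.
  set w : τ → ℝ := fun t => θ t * q / p t
  have hw : ∑ t ∈ T, w t = 1 := by
    simp only [w, mul_div_right_comm, ← sum_mul, ← hpq, inv_mul_cancel₀ hq.ne']
  have hw0 : ∀ t ∈ T, 0 ≤ w t := fun t ht => by
    have := hp t ht; have := hθ0 t ht; positivity
  have hfw : ∀ i, (∏ t ∈ T, f t i ^ θ t) ^ q = ∏ t ∈ T, (f t i ^ p t) ^ w t := fun i => by
    rw [← finsetProd_rpow]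
    refine prod_congr rfl fun t ht => ?_
    rw [← rpow_mul, ← rpow_mul]
    congr 1
    simp only [w]; field_simp [(hp t ht).ne']
  calc finLpNorm q (fun i => ∏ t ∈ T, f t i ^ θ t)
      = (∑ i, ∏ t ∈ T, (f t i ^ p t) ^ w t) ^ q⁻¹ := by simp only [finLpNorm, hfw]
    _ ≤ (∏ t ∈ T, (∑ i, f t i ^ p t) ^ w t) ^ q⁻¹ := by
        gcongr
        exact sum_prod_rpow_le_prod_sum_rpow T w hw hw0 _
    _ = ∏ t ∈ T, finLpNorm (p t) (f t) ^ θ t := by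
        rw [← finsetProd_rpow]
        refine prod_congr rfl fun t ht => ?_
        rw [finLpNorm, ← rpow_mul, ← rpow_mul]
        congr 1
        simp only [w]; field_simp [(hp t ht).ne', hq.ne']

end finLpNorm

section mixedNorm

variable {α : Type*} [Fintype α]

noncomputable def mixedNorm : {M : ℕ} → (Fin M → ℝ) → ((Fin M → α) → ℝ≥0) → ℝ≥0
  | 0, _, a => a Fin.elim0
  | _ + 1, p, a =>
    finLpNorm (p 0) (fun x => mixedNorm (Fin.tail p) (fun i => a (Fin.cons x i)))

theorem mixedNorm_const {M : ℕ} {c : ℝ} (hc : c ≠ 0) (a : (Fin M → α) → ℝ≥0) :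
    mixedNorm (fun _ => c) a = finLpNorm c a := by
  induction M with
  | zero => rw [mixedNorm, finLpNorm_unique hc]; exact congrArg a (Subsingleton.elim _ _)
  | succ M ih =>
    change finLpNorm c (fun x => mixedNorm (fun _ => c) _) = _
    simp only [ih]
    rw [finLpNorm_finLpNorm hc]
    exact finLpNorm_comp_equiv (Fin.consEquiv fun _ => α) a

theorem mixedNorm_le_prod_rpow {τ : Type*} (T : Finset τ) {θ : τ → ℝ}
    (hθ : ∑ t ∈ T, θ t = 1) (hθ0 : ∀ t ∈ T, 0 ≤ θ t) {M : ℕ} {p : τ → Fin M → ℝ}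
    {q : Fin M → ℝ} (hp : ∀ t ∈ T, ∀ j, 0 < p t j) (hq : ∀ j, 0 < q j)
    (hpq : ∀ j, (q j)⁻¹ = ∑ t ∈ T, θ t / p t j) (a : (Fin M → α) → ℝ≥0) :
    mixedNorm q a ≤ ∏ t ∈ T, mixedNorm (p t) a ^ θ t := by
  induction M with
  | zero =>
    rw [mixedNorm, ← NNReal.coe_le_coe]
    push_cast [mixedNorm]
    rw [← Real.rpow_sum_of_nonneg (coe_nonneg _) hθ0, hθ, Real.rpow_one]
  | succ M ih =>
    rw [mixedNorm]
    calc finLpNorm (q 0) (fun x => mixedNorm (Fin.tail q) (fun i => a (Fin.cons x i)))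
        ≤ finLpNorm (q 0) (fun x =>
            ∏ t ∈ T, mixedNorm (Fin.tail (p t)) (fun i => a (Fin.cons x i)) ^ θ t) :=
          finLpNorm_mono (hq 0) fun x => ih (fun t ht j => hp t ht j.succ) (fun j => hq j.succ)
            (fun j => hpq j.succ) _
      _ ≤ ∏ t ∈ T, mixedNorm (p t) a ^ θ t :=
          finLpNorm_prod_rpow_le T hθ0 (fun t ht => hp t ht 0) (hq 0) (hpq 0) _

end mixedNorm

namespace Finset

variable {M : ℕ}

def succPreimage (S : Finset (Fin (M + 1))) : Finset (Fin M) :=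
  {j | j.succ ∈ S}

@[simp] theorem mem_succPreimage {S : Finset (Fin (M + 1))} {j : Fin M} :
    j ∈ S.succPreimage ↔ j.succ ∈ S := by
  simp [succPreimage]

theorem mem_compl_succPreimage {S : Finset (Fin (M + 1))} {j : Fin M} :
    j ∈ S.succPreimageᶜ ↔ j.succ ∈ Sᶜ := by
  simp

end Finset

section splitZero

variable {α : Type*} {M : ℕ} {T : Finset (Fin (M + 1))} {U : Finset (Fin M)}

def funEquivOfZeroNotMem (hTU : ∀ j, j.succ ∈ T ↔ j ∈ U) (h0 : 0 ∉ T) :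
    ({j // j ∈ U} → α) ≃ ({i // i ∈ T} → α) where
  toFun g i := g ⟨i.1.pred (ne_of_mem_of_not_mem i.2 h0), (hTU _).mp (by simp [i.2])⟩
  invFun g j := g ⟨j.1.succ, (hTU _).mpr j.2⟩
  left_inv g := by simp
  right_inv g := by simp

def funEquivOfZeroMem (hTU : ∀ j, j.succ ∈ T ↔ j ∈ U) (h0 : 0 ∈ T) :
    α × ({j // j ∈ U} → α) ≃ ({i // i ∈ T} → α) where
  toFun xg i := Fin.cases (motive := fun i => i ∈ T → α) (fun _ => xg.1)
    (fun j hj => xg.2 ⟨j, (hTU j).mp hj⟩) i.1 i.2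
  invFun g := (g ⟨0, h0⟩, fun j => g ⟨j.1.succ, (hTU _).mpr j.2⟩)
  left_inv xg := by simp
  right_inv g := by
    funext ⟨i, hi⟩
    induction i using Fin.cases <;> simp

end splitZero

section blockNorm

variable {n M : ℕ}

theorem combineIdx_funEquivOfZeroMem {S : Finset (Fin (M + 1))} (h0 : 0 ∈ S) (x : Fin n)
    (g : {j // j ∈ S.succPreimage} → Fin n) (h : {j // j ∈ S.succPreimageᶜ} → Fin n) :
    combineIdx S (funEquivOfZeroMem (fun _ => mem_succPreimage.symm) h0 (x, g))
        (funEquivOfZeroNotMem (fun _ => mem_compl_succPreimage.symm) (notMem_compl.mpr h0) h) =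
      Fin.cons x (combineIdx S.succPreimage g h) := by
  funext i
  induction i using Fin.cases with
  | zero => simp [combineIdx, funEquivOfZeroMem, h0]
  | succ j =>
    by_cases hj : j.succ ∈ S <;>
      simp [combineIdx, funEquivOfZeroMem, funEquivOfZeroNotMem, hj]

theorem combineIdx_funEquivOfZeroNotMem {S : Finset (Fin (M + 1))} (h0 : 0 ∉ S) (x : Fin n)
    (g : {j // j ∈ S.succPreimage} → Fin n) (h : {j // j ∈ S.succPreimageᶜ} → Fin n) :
    combineIdx S (funEquivOfZeroNotMem (fun _ => mem_succPreimage.symm) h0 g)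
        (funEquivOfZeroMem (fun _ => mem_compl_succPreimage.symm) (mem_compl.mpr h0) (x, h)) =
      Fin.cons x (combineIdx S.succPreimage g h) := by
  funext i
  induction i using Fin.cases with
  | zero => simp [combineIdx, funEquivOfZeroMem, h0]
  | succ j =>
    by_cases hj : j.succ ∈ S <;>
      simp [combineIdx, funEquivOfZeroMem, funEquivOfZeroNotMem, hj]

noncomputable def blockNorm (S : Finset (Fin M)) (s c : ℝ) (a : (Fin M → Fin n) → ℝ≥0) :
    ℝ≥0 :=
  finLpNorm s (fun g => finLpNorm c (fun h => a (combineIdx S g h)))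

theorem blockNorm_of_zero_mem {S : Finset (Fin (M + 1))} (h0 : 0 ∈ S) {s : ℝ} (hs : s ≠ 0)
    (c : ℝ) (a : (Fin (M + 1) → Fin n) → ℝ≥0) :
    blockNorm S s c a =
      finLpNorm s (fun x => blockNorm S.succPreimage s c (fun i => a (Fin.cons x i))) := by
  rw [blockNorm, ← finLpNorm_comp_equiv (funEquivOfZeroMem (fun _ => mem_succPreimage.symm) h0)]
  simp only [blockNorm]
  rw [finLpNorm_finLpNorm hs]
  congr 1
  funext ⟨x, g⟩
  rw [← finLpNorm_comp_equiv
    (funEquivOfZeroNotMem (fun _ => mem_compl_succPreimage.symm) (notMem_compl.mpr h0))]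
  simp only [combineIdx_funEquivOfZeroMem]

theorem finLpNorm_blockNorm_le_of_zero_not_mem {S : Finset (Fin (M + 1))} (h0 : 0 ∉ S)
    {s c : ℝ} (hs : 0 < s) (hsc : s ≤ c) (a : (Fin (M + 1) → Fin n) → ℝ≥0) :
    finLpNorm c (fun x => blockNorm S.succPreimage s c (fun i => a (Fin.cons x i))) ≤
      blockNorm S s c a := by
  refine (finLpNorm_finLpNorm_le_swap hs hsc _).trans_eq ?_
  rw [blockNorm, ← finLpNorm_comp_equiv
    (funEquivOfZeroNotMem (fun _ => mem_succPreimage.symm) h0)]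
  congr 1
  funext g
  rw [finLpNorm_finLpNorm (hs.trans_le hsc).ne', ← finLpNorm_comp_equiv
    (funEquivOfZeroMem (fun _ => mem_compl_succPreimage.symm) (mem_compl.mpr h0))]
  congr 1
  funext ⟨x, h⟩
  rw [combineIdx_funEquivOfZeroNotMem]

theorem mixedNorm_le_blockNorm {s c : ℝ} (hs : 0 < s) (hsc : s ≤ c) (S : Finset (Fin M))
    (a : (Fin M → Fin n) → ℝ≥0) :
    mixedNorm (fun j => if j ∈ S then s else c) a ≤ blockNorm S s c a := by
  induction M with
  | zero =>
    rw [mixedNorm, blockNorm, finLpNorm_unique hs.ne', finLpNorm_unique (hs.trans_le hsc).ne']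
    exact (congrArg a (Subsingleton.elim _ _)).le
  | succ M ih =>
    have htail : Fin.tail (fun j => if j ∈ S then s else c) =
        fun j => if j ∈ S.succPreimage then s else c := by
      funext j; simp [Fin.tail]
    rw [mixedNorm, htail]
    by_cases h0 : 0 ∈ S
    · rw [if_pos h0, blockNorm_of_zero_mem h0 hs.ne']
      exact finLpNorm_mono hs fun x => ih _ _
    · rw [if_neg h0]
      exact (finLpNorm_mono (hs.trans_le hsc) fun x => ih _ _).trans
        (finLpNorm_blockNorm_le_of_zero_not_mem h0 hs hsc a)

end blockNorm

theorem card_mul_card_filter_mem_powersetCard {m k : ℕ} (hk : 1 ≤ k) (j : Fin m) :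
    m * #{S ∈ powersetCard k (univ : Finset (Fin m)) | j ∈ S} = k * m.choose k := by
  have hcount := card_filter_powersetCard_subset {j} univ k (by simp) (by simpa)
  simp only [singleton_subset_iff, card_singleton, card_univ, Fintype.card_fin] at hcount
  rw [hcount]
  obtain ⟨k, rfl⟩ : ∃ k', k = k' + 1 := ⟨k - 1, by omega⟩
  obtain ⟨m, rfl⟩ : ∃ m', m = m' + 1 := ⟨m - 1, by have := j.pos; omega⟩
  rw [add_tsub_cancel_right, add_tsub_cancel_right, Nat.add_one_mul_choose_eq, mul_comm]

theorem inv_blei_exponent_eq_sum {m k : ℕ} (hk : 1 ≤ k) (hkm : k ≤ m) (j : Fin m) :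
    ((2 * m : ℝ) / (m + 1))⁻¹ = ∑ S ∈ powersetCard k (univ : Finset (Fin m)),
      (m.choose k : ℝ)⁻¹ / (if j ∈ S then (2 * k : ℝ) / (k + 1) else 2) := by
  have hcount : (m : ℝ) * #{S ∈ powersetCard k univ | j ∈ S} = k * m.choose k := by
    exact_mod_cast card_mul_card_filter_mem_powersetCard hk j
  have hk0 : (k : ℝ) ≠ 0 := by positivity
  have hm0 : (m : ℝ) ≠ 0 := by have := j.pos; positivity
  have hC : (m.choose k : ℝ) ≠ 0 := by exact_mod_cast (Nat.choose_pos hkm).ne'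
  have term : ∀ S : Finset (Fin m),
      (m.choose k : ℝ)⁻¹ / (if j ∈ S then (2 * k : ℝ) / (k + 1) else 2) =
        (m.choose k : ℝ)⁻¹ * (2⁻¹ + (2 * k : ℝ)⁻¹ * if j ∈ S then 1 else 0) := by
    intro S
    split_ifs
    · field_simp
    · simp [div_eq_mul_inv]
  rw [sum_congr rfl fun S _ => term S, ← mul_sum, sum_add_distrib, sum_const, card_powersetCard,
    ← mul_sum, sum_boole]
  simp only [card_univ, Fintype.card_fin, nsmul_eq_mul]
  field_simp
  linear_combination -hcount

theorem blei_nnreal {m n k : ℕ} (hk1 : 1 ≤ k) (hkm : k ≤ m) (A : (Fin m → Fin n) → ℝ≥0) :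
    finLpNorm ((2 * m : ℝ) / (m + 1)) A ≤
      ∏ S ∈ powersetCard k (univ : Finset (Fin m)),
        blockNorm S ((2 * k : ℝ) / (k + 1)) 2 A ^ (m.choose k : ℝ)⁻¹ := by
  have hm : (0 : ℝ) < m := by exact_mod_cast hk1.trans hkm
  have hk : (0 : ℝ) < k := by exact_mod_cast hk1
  have hs : (0 : ℝ) < (2 * k : ℝ) / (k + 1) := by positivity
  have hs2 : (2 * k : ℝ) / (k + 1) ≤ 2 := by rw [div_le_iff₀ (by positivity)]; linarith
  have hθ : ∑ S ∈ powersetCard k (univ : Finset (Fin m)), (m.choose k : ℝ)⁻¹ = 1 := by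
    rw [sum_const, card_powersetCard, card_univ, Fintype.card_fin, nsmul_eq_mul,
      mul_inv_cancel₀ (by exact_mod_cast (Nat.choose_pos hkm).ne')]
  calc finLpNorm ((2 * m : ℝ) / (m + 1)) A
      = mixedNorm (fun _ => (2 * m : ℝ) / (m + 1)) A := (mixedNorm_const (by positivity) A).symm
    _ ≤ ∏ S ∈ powersetCard k univ,
          mixedNorm (fun j => if j ∈ S then (2 * k : ℝ) / (k + 1) else 2) A ^
            (m.choose k : ℝ)⁻¹ :=
        mixedNorm_le_prod_rpow _ hθ (fun _ _ => by positivity)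
          (fun S _ j => by split_ifs <;> positivity) (fun _ => by positivity)
          (inv_blei_exponent_eq_sum hk1 hkm) A
    _ ≤ _ := prod_le_prod' fun S _ =>
        rpow_le_rpow (mixedNorm_le_blockNorm hs hs2 S A) (by positivity)

theorem blei_generalized_general {m n k : ℕ} (hk1 : 1 ≤ k) (hkm : k ≤ m)
    (a : (Fin m → Fin n) → ℂ) :
    (∑ i : Fin m → Fin n, ‖a i‖ ^ ((2 * m : ℝ) / (m + 1))) ^
        ((m + 1 : ℝ) / (2 * m)) ≤
      ∏ S ∈ Finset.powersetCard k (Finset.univ : Finset (Fin m)),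
        ((∑ g : {x // x ∈ S} → Fin n,
            (∑ h : {x // x ∈ Sᶜ} → Fin n,
              ‖a (combineIdx S g h)‖ ^ 2) ^
                ((1 / 2 : ℝ) * ((2 * k : ℝ) / (k + 1)))) ^
          (((k + 1 : ℝ) / (2 * k)) * (1 / (Nat.choose m k : ℝ)))) := by
  have key := NNReal.coe_le_coe.mpr (blei_nnreal hk1 hkm fun i => ‖a i‖₊)
  simp only [finLpNorm, blockNorm, NNReal.coe_rpow, NNReal.coe_sum, NNReal.coe_prod, coe_nnnorm,
    Real.rpow_two] at key
  convert key using 1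
  · rw [inv_div]
  · refine prod_congr rfl fun S _ => ?_
    simp only [one_div, inv_div]
    rw [← Real.rpow_mul (by positivity)]
    congr 1
    refine sum_congr rfl fun g _ => ?_
    rw [← Real.rpow_mul (by positivity)]

/-- Generalized Blei inequality (Theorem 2.2). -/
theorem blei_generalized {m n k : ℕ} (hm : 1 ≤ m) (hk1 : 1 ≤ k) (hkm : k ≤ m)
    (a : (Fin m → Fin n) → ℂ) :
    (∑ i : Fin m → Fin n, ‖a i‖ ^ ((2 * m : ℝ) / (m + 1))) ^
        ((m + 1 : ℝ) / (2 * m)) ≤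
      ∏ S ∈ Finset.powersetCard k (Finset.univ : Finset (Fin m)),
        ((∑ g : {x // x ∈ S} → Fin n,
            (∑ h : {x // x ∈ Sᶜ} → Fin n,
              ‖a (combineIdx S g h)‖ ^ 2) ^
                ((1 / 2 : ℝ) * ((2 * k : ℝ) / (k + 1)))) ^
          (((k + 1 : ℝ) / (2 * k)) * (1 / (Nat.choose m k : ℝ)))) :=
  blei_generalized_general hk1 hkm a
end

section
/- Let q > max(s₁, s₂) with q, s₁, s₂ ≥ 1, and define w(x,y) = (q²(x+y) − 2qxy)/(q² − xy) and f(x,y) = (q²x − qxy)/(q²(x+y) − 2qxy). Then for any finite matrix (a_{ij})_{(i,j) ∈ A×B} with nonnegative entries, (∑_{(i,j)} a_{ij}^{w(s₁,s₂)})^{1/w(s₁,s₂)} ≤ (∑_{i∈A} (∑_{j∈B} a_{ij}^q)^{s₁/q})^{f(s₁,s₂)/s₁} · (∑_{j∈B} (∑_{i∈A} a_{ij}^q)^{s₂/q})^{f(s₂,s₁)/s₂}. -/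
/-!
Write `w = c₁ + c₂` with `c₁ = q s₁ (q - s₂) / (q² - s₁ s₂)` and
`c₂ = q s₂ (q - s₁) / (q² - s₁ s₂)`; these are the exponents for which `c₁ / q + c₂ / s₂ = 1` and `c₁ / s₁ + c₂ / q = 1`. Splitting
`a_{ij}^w = a_{ij}^{c₁} a_{ij}^{c₂}`, Hölder's inequality along each row bounds the sum by
`∑_i ‖β_i‖_q^{c₁} ‖β_i‖_{s₂}^{c₂}`, Hölder's inequality in `i` bounds this by
`(∑_i ‖β_i‖_q^{s₁})^{c₁/s₁} (∑_i ‖β_i‖_{s₂}^q)^{c₂/q}`, and Minkowski's inequality in `ℓ^{q/s₂}`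
bounds the `ℓ^q(ℓ^{s₂})` mixed norm in the second factor by the `ℓ^{s₂}(ℓ^q)` mixed norm
`(∑_j ‖α_j‖_q^{s₂})^{1/s₂}`.
-/

open Finset Real

lemma Lp_sum_le_sum_Lp {ι κ : Type*} (s : Finset ι) (t : Finset κ) {b : ι → κ → ℝ}
    (hb : ∀ i j, 0 ≤ b i j) {p : ℝ} (hp : 1 ≤ p) :
    (∑ i ∈ s, (∑ j ∈ t, b i j) ^ p) ^ (1 / p) ≤ ∑ j ∈ t, (∑ i ∈ s, b i j ^ p) ^ (1 / p) := by
  classical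
  induction t using Finset.induction_on with
  | empty =>
    have hp0 : 0 < p := by linarith
    simp [zero_rpow hp0.ne', zero_rpow (inv_pos.2 hp0).ne']
  | insert k t hk ih =>
    simp only [sum_insert hk]
    calc (∑ i ∈ s, (b i k + ∑ j ∈ t, b i j) ^ p) ^ (1 / p)
        ≤ (∑ i ∈ s, b i k ^ p) ^ (1 / p) + (∑ i ∈ s, (∑ j ∈ t, b i j) ^ p) ^ (1 / p) :=
          Lp_add_le_of_nonneg s hp (fun i _ ↦ hb i k) fun i _ ↦ sum_nonneg fun j _ ↦ hb i j
      _ ≤ _ := add_le_add_right ih _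

/-- Hölder's inequality with the exponents `p / c` and `r / d`. -/
lemma sum_rpow_mul_rpow_le {ι : Type*} (s : Finset ι) {f g : ι → ℝ} (hf : ∀ i ∈ s, 0 ≤ f i)
    (hg : ∀ i ∈ s, 0 ≤ g i) {c d p r : ℝ} (hc : 0 < c) (hd : 0 < d) (hp : 0 < p) (hr : 0 < r)
    (hcd : c / p + d / r = 1) :
    ∑ i ∈ s, f i ^ c * g i ^ d ≤ (∑ i ∈ s, f i ^ p) ^ (c / p) * (∑ i ∈ s, g i ^ r) ^ (d / r) := by
  have hpr : (p / c).HolderConjugate (r / d) := by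
    simpa only [one_div_div] using holderConjugate_one_div (by positivity) (by positivity) hcd
  have hfc : ∀ i ∈ s, (f i ^ c) ^ (p / c) = f i ^ p := fun i hi ↦ by
    rw [← rpow_mul (hf i hi), mul_div_cancel₀ _ hc.ne']
  have hgd : ∀ i ∈ s, (g i ^ d) ^ (r / d) = g i ^ r := fun i hi ↦ by
    rw [← rpow_mul (hg i hi), mul_div_cancel₀ _ hd.ne']
  have := inner_le_Lp_mul_Lq_of_nonneg s hpr (fun i hi ↦ rpow_nonneg (hf i hi) c)
    (fun i hi ↦ rpow_nonneg (hg i hi) d)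
  rwa [sum_congr rfl hfc, sum_congr rfl hgd, one_div_div, one_div_div] at this

/-- The `ℓ^q(ℓ^p)` mixed norm is dominated by the `ℓ^p(ℓ^q)` mixed norm when `p ≤ q`. -/
lemma sum_rpow_sum_rpow_le_sum_rpow_sum_rpow {A B : Type*} [Fintype A] [Fintype B]
    {a : A → B → ℝ} (ha : ∀ i j, 0 ≤ a i j) {p q : ℝ} (hp : 0 < p) (hpq : p ≤ q) :
    (∑ i, (∑ j, a i j ^ p) ^ (q / p)) ^ (p / q) ≤ ∑ j, (∑ i, a i j ^ q) ^ (p / q) := by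
  have hqp : ∀ i j, (a i j ^ p) ^ (q / p) = a i j ^ q := fun i j ↦ by
    rw [← rpow_mul (ha i j), mul_div_cancel₀ _ hp.ne']
  have := Lp_sum_le_sum_Lp univ univ (fun i j ↦ rpow_nonneg (ha i j) p)
    ((one_le_div hp).mpr hpq)
  simpa only [hqp, one_div_div] using this

theorem sum_sum_rpow_add_le {A B : Type*} [Fintype A] [Fintype B] {a : A → B → ℝ}
    (ha : ∀ i j, 0 ≤ a i j) {q p₁ p₂ c₁ c₂ : ℝ} (hp₁ : 0 < p₁) (hp₂ : 0 < p₂) (hp₂q : p₂ ≤ q)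
    (hc₁ : 0 < c₁) (hc₂ : 0 < c₂) (hrow : c₁ / q + c₂ / p₂ = 1) (hcol : c₁ / p₁ + c₂ / q = 1) :
    ∑ i, ∑ j, a i j ^ (c₁ + c₂) ≤
      (∑ i, (∑ j, a i j ^ q) ^ (p₁ / q)) ^ (c₁ / p₁) *
        (∑ j, (∑ i, a i j ^ q) ^ (p₂ / q)) ^ (c₂ / p₂) := by
  have hq : 0 < q := hp₂.trans_le hp₂q
  set F : A → ℝ := fun i ↦ ∑ j, a i j ^ q
  set G : A → ℝ := fun i ↦ ∑ j, a i j ^ p₂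
  have hF : ∀ i ∈ univ, 0 ≤ F i := fun i _ ↦ sum_nonneg fun j _ ↦ rpow_nonneg (ha i j) q
  have hG : ∀ i ∈ univ, 0 ≤ G i := fun i _ ↦ sum_nonneg fun j _ ↦ rpow_nonneg (ha i j) p₂
  have hGsum : 0 ≤ ∑ i, G i ^ (q / p₂) := sum_nonneg fun i hi ↦ rpow_nonneg (hG i hi) _
  have rows : ∀ i, ∑ j, a i j ^ (c₁ + c₂) ≤ F i ^ (c₁ / q) * G i ^ (c₂ / p₂) := fun i ↦ by
    simpa only [← rpow_add' (ha i _) (add_pos hc₁ hc₂).ne'] using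
      sum_rpow_mul_rpow_le univ (fun j _ ↦ ha i j) (fun j _ ↦ ha i j) hc₁ hc₂ hq hp₂ hrow
  have cols := sum_rpow_mul_rpow_le univ hF hG (div_pos hc₁ hq) (div_pos hc₂ hp₂)
    (div_pos hp₁ hq) (div_pos hq hp₂)
    (by rwa [div_div_div_cancel_right₀ hq.ne', div_div_div_cancel_right₀ hp₂.ne'])
  rw [div_div_div_cancel_right₀ hq.ne', div_div_div_cancel_right₀ hp₂.ne'] at cols
  have mixed :
      (∑ i, G i ^ (q / p₂)) ^ (c₂ / q) ≤ (∑ j, (∑ i, a i j ^ q) ^ (p₂ / q)) ^ (c₂ / p₂) := by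
    rw [← div_mul_div_cancel₀' hp₂.ne' q c₂, rpow_mul hGsum]
    exact rpow_le_rpow (rpow_nonneg hGsum _)
      (sum_rpow_sum_rpow_le_sum_rpow_sum_rpow ha hp₂ hp₂q) (div_pos hc₂ hp₂).le
  calc ∑ i, ∑ j, a i j ^ (c₁ + c₂)
      ≤ ∑ i, F i ^ (c₁ / q) * G i ^ (c₂ / p₂) := sum_le_sum fun i _ ↦ rows i
    _ ≤ (∑ i, F i ^ (p₁ / q)) ^ (c₁ / p₁) * (∑ i, G i ^ (q / p₂)) ^ (c₂ / q) := cols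
    _ ≤ _ := mul_le_mul_of_nonneg_left mixed
          (rpow_nonneg (sum_nonneg fun i hi ↦ rpow_nonneg (hF i hi) _) _)

theorem rpow_one_div_sum_sum_rpow_add_le {A B : Type*} [Fintype A] [Fintype B]
    {a : A → B → ℝ} (ha : ∀ i j, 0 ≤ a i j) {q p₁ p₂ c₁ c₂ : ℝ} (hp₁ : 0 < p₁) (hp₂ : 0 < p₂)
    (hp₂q : p₂ ≤ q) (hc₁ : 0 < c₁) (hc₂ : 0 < c₂) (hrow : c₁ / q + c₂ / p₂ = 1)
    (hcol : c₁ / p₁ + c₂ / q = 1) :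
    (∑ i, ∑ j, a i j ^ (c₁ + c₂)) ^ (1 / (c₁ + c₂)) ≤
      (∑ i, (∑ j, a i j ^ q) ^ (p₁ / q)) ^ (c₁ / (c₁ + c₂) / p₁) *
        (∑ j, (∑ i, a i j ^ q) ^ (p₂ / q)) ^ (c₂ / (c₁ + c₂) / p₂) := by
  have hX : 0 ≤ ∑ i, (∑ j, a i j ^ q) ^ (p₁ / q) :=
    sum_nonneg fun i _ ↦ rpow_nonneg (sum_nonneg fun j _ ↦ rpow_nonneg (ha i j) q) _
  have hT : 0 ≤ ∑ j, (∑ i, a i j ^ q) ^ (p₂ / q) :=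
    sum_nonneg fun j _ ↦ rpow_nonneg (sum_nonneg fun i _ ↦ rpow_nonneg (ha i j) q) _
  calc (∑ i, ∑ j, a i j ^ (c₁ + c₂)) ^ (1 / (c₁ + c₂))
      ≤ ((∑ i, (∑ j, a i j ^ q) ^ (p₁ / q)) ^ (c₁ / p₁) *
          (∑ j, (∑ i, a i j ^ q) ^ (p₂ / q)) ^ (c₂ / p₂)) ^ (1 / (c₁ + c₂)) :=
        rpow_le_rpow (sum_nonneg fun i _ ↦ sum_nonneg fun j _ ↦ rpow_nonneg (ha i j) _)
          (sum_sum_rpow_add_le ha hp₁ hp₂ hp₂q hc₁ hc₂ hrow hcol) (by positivity)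
    _ = _ := by
        rw [mul_rpow (rpow_nonneg hX _) (rpow_nonneg hT _), ← rpow_mul hX, ← rpow_mul hT]
        congr 2 <;> ring

theorem defant_popa_schwarting_general {A B : Type*} [Fintype A] [Fintype B]
    (q s₁ s₂ : ℝ) (hs₁ : 1 ≤ s₁) (hs₂ : 1 ≤ s₂) (hq : max s₁ s₂ < q)
    (a : A → B → ℝ) (ha : ∀ i j, 0 ≤ a i j) :
    (∑ i : A, ∑ j : B,
        a i j ^ ((q ^ 2 * (s₁ + s₂) - 2 * q * s₁ * s₂) / (q ^ 2 - s₁ * s₂))) ^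
        (1 / ((q ^ 2 * (s₁ + s₂) - 2 * q * s₁ * s₂) / (q ^ 2 - s₁ * s₂))) ≤
      (∑ i : A, (∑ j : B, a i j ^ q) ^ (s₁ / q)) ^
          (((q ^ 2 * s₁ - q * s₁ * s₂) / (q ^ 2 * (s₁ + s₂) - 2 * q * s₁ * s₂)) / s₁) *
        (∑ j : B, (∑ i : A, a i j ^ q) ^ (s₂ / q)) ^
          (((q ^ 2 * s₂ - q * s₂ * s₁) / (q ^ 2 * (s₂ + s₁) - 2 * q * s₂ * s₁)) / s₂) := by
  obtain ⟨hq₁, hq₂⟩ := max_lt_iff.mp hq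
  have hs₁₀ : 0 < s₁ := by linarith
  have hs₂₀ : 0 < s₂ := by linarith
  have hq₀ : 0 < q := by linarith
  have hD : 0 < q ^ 2 - s₁ * s₂ := by nlinarith
  set c₁ := q * s₁ * (q - s₂) / (q ^ 2 - s₁ * s₂)
  set c₂ := q * s₂ * (q - s₁) / (q ^ 2 - s₁ * s₂)
  have hc₁ : 0 < c₁ := div_pos (mul_pos (by positivity) (by linarith)) hD
  have hc₂ : 0 < c₂ := div_pos (mul_pos (by positivity) (by linarith)) hD
  have hw : (q ^ 2 * (s₁ + s₂) - 2 * q * s₁ * s₂) / (q ^ 2 - s₁ * s₂) = c₁ + c₂ := by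
    simp only [c₁, c₂]; field_simp; ring
  have hf₁ : (q ^ 2 * s₁ - q * s₁ * s₂) / (q ^ 2 * (s₁ + s₂) - 2 * q * s₁ * s₂) =
      c₁ / (c₁ + c₂) := by
    rw [← hw, div_div_div_cancel_right₀ hD.ne']; ring
  have hf₂ : (q ^ 2 * s₂ - q * s₂ * s₁) / (q ^ 2 * (s₂ + s₁) - 2 * q * s₂ * s₁) =
      c₂ / (c₁ + c₂) := by
    rw [← hw, div_div_div_cancel_right₀ hD.ne']; ring
  rw [hw, hf₁, hf₂]
  exact rpow_one_div_sum_sum_rpow_add_le ha hs₁₀ hs₂₀ hq₂.le hc₁ hc₂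
    (by simp only [c₁, c₂]; field_simp; ring) (by simp only [c₁, c₂]; field_simp; ring)

/-- Defant–Popa–Schwarting variant of Blei's inequality (Theorem 2.3). -/
theorem defant_popa_schwarting {A B : Type*} [Fintype A] [Fintype B]
    [Nonempty A] [Nonempty B]
    (q s₁ s₂ : ℝ) (hs₁ : 1 ≤ s₁) (hs₂ : 1 ≤ s₂) (hq : max s₁ s₂ < q)
    (a : A → B → ℝ) (ha : ∀ i j, 0 ≤ a i j) :
    (∑ i : A, ∑ j : B,
        a i j ^ ((q ^ 2 * (s₁ + s₂) - 2 * q * s₁ * s₂) / (q ^ 2 - s₁ * s₂))) ^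
        (1 / ((q ^ 2 * (s₁ + s₂) - 2 * q * s₁ * s₂) / (q ^ 2 - s₁ * s₂))) ≤
      (∑ i : A, (∑ j : B, a i j ^ q) ^ (s₁ / q)) ^
          (((q ^ 2 * s₁ - q * s₁ * s₂) / (q ^ 2 * (s₁ + s₂) - 2 * q * s₁ * s₂)) / s₁) *
        (∑ j : B, (∑ i : A, a i j ^ q) ^ (s₂ / q)) ^
          (((q ^ 2 * s₂ - q * s₂ * s₁) / (q ^ 2 * (s₂ + s₁) - 2 * q * s₂ * s₁)) / s₂) :=
  defant_popa_schwarting_general q s₁ s₂ hs₁ hs₂ hq a ha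
end

section
/- Γ(2 − 1/m)^{−m/(2m−2)} = exp((1−γ)/(2m) + O(1/m²)) as m → ∞; in particular there exists a constant C such that for all m ≥ 2, Γ(2 − 1/m)^{−m/(2m−2)} ≤ exp((1−γ)/(2m) + C/m²), where γ is the Euler–Mascheroni constant. -/
open Real

/-- The derivative of `log ∘ Γ` at `2` is `1 - γ`. -/
lemma hasDerivAt_log_Gamma_two :
    HasDerivAt (fun x => Real.log (Real.Gamma x)) (1 - Real.eulerMascheroniConstant) 2 := by
  have h := Real.hasDerivAt_Gamma_nat 1
  norm_num at h
  have h2 : Real.Gamma 2 ≠ 0 := by rw [Real.Gamma_two]; norm_num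
  have := h.log h2
  convert this using 1 <;> simp [Real.Gamma_two] <;> ring

/-- Tangent-line lower bound: `log Γ(x) ≥ -(1-γ)(2-x)` for `0 < x < 2`. -/
lemma log_Gamma_lower {x : ℝ} (hx : 0 < x) (hx2 : x < 2) :
    -(1 - Real.eulerMascheroniConstant) * (2 - x) ≤ Real.log (Real.Gamma x) := by
  have hc : ConvexOn ℝ (Set.Ioi 0) (Real.log ∘ Real.Gamma) := Real.convexOn_log_Gamma
  have hd : HasDerivAt (Real.log ∘ Real.Gamma) (1 - Real.eulerMascheroniConstant) 2 :=
    hasDerivAt_log_Gamma_two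
  have hslope := hc.slope_le_deriv (Set.mem_Ioi.mpr hx) (Set.mem_Ioi.mpr (by norm_num)) hx2
    hd.differentiableAt
  rw [hd.deriv] at hslope
  rw [slope_def_field] at hslope
  have hΓ2 : (Real.log ∘ Real.Gamma) 2 = 0 := by
    simp [Real.Gamma_two]
  rw [hΓ2] at hslope
  have hpos : 0 < 2 - x := by linarith
  rw [div_le_iff₀ hpos] at hslope
  simp only [Function.comp_apply] at hslope
  nlinarith [hslope]

/-- `Γ(2 - 1/m)^{-m/(2m-2)} = exp((1-γ)/(2m) + O(1/m²))`, stated as an explicit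
bound valid for all `m ≥ 2`, where `γ` is the Euler–Mascheroni constant. -/
theorem gamma_rpow_asymptotic :
    ∃ C : ℝ, ∀ m : ℕ, 2 ≤ m →
      Real.Gamma (2 - 1 / (m : ℝ)) ^ (-(m : ℝ) / (2 * m - 2)) ≤
        Real.exp ((1 - Real.eulerMascheroniConstant) / (2 * m) + C / m ^ 2) := by
  set γ := Real.eulerMascheroniConstant
  refine ⟨1 - γ, fun m hm => ?_⟩
  have hγ : 0 < 1 - γ := by
    have := Real.eulerMascheroniConstant_lt_two_thirds
    unfold γ; linarith
  have hM : (2 : ℝ) ≤ (m : ℝ) := by exact_mod_cast hm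
  have hMpos : (0 : ℝ) < m := by linarith
  set x : ℝ := 2 - 1 / m with hxdef
  have hx0 : 0 < x := by
    have : 1 / (m : ℝ) ≤ 1 / 2 := by
      apply one_div_le_one_div_of_le <;> linarith
    simp only [hxdef]; linarith
  have hx2 : x < 2 := by
    simp only [hxdef]
    have : 0 < 1 / (m : ℝ) := by positivity
    linarith
  have hΓpos : 0 < Real.Gamma x := Real.Gamma_pos_of_pos hx0
  have hlog : -(1 - γ) * (1 / m) ≤ Real.log (Real.Gamma x) := by
    have := log_Gamma_lower hx0 hx2
    have h2x : (2 : ℝ) - x = 1 / m := by simp [hxdef]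
    rwa [h2x] at this
  rw [Real.rpow_def_of_pos hΓpos, Real.exp_le_exp]
  have hden : (0 : ℝ) < 2 * (m : ℝ) - 2 := by linarith
  have hr : Real.log (Real.Gamma x) * (-(m : ℝ) / (2 * m - 2)) ≤ (1 - γ) / (2 * m - 2) := by
    have hcoef : (0 : ℝ) ≤ (m : ℝ) / (2 * m - 2) := by positivity
    have h1 : -Real.log (Real.Gamma x) ≤ (1 - γ) * (1 / m) := by linarith
    calc Real.log (Real.Gamma x) * (-(m : ℝ) / (2 * m - 2))
        = (-Real.log (Real.Gamma x)) * ((m : ℝ) / (2 * m - 2)) := by ring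
      _ ≤ ((1 - γ) * (1 / m)) * ((m : ℝ) / (2 * m - 2)) :=
          mul_le_mul_of_nonneg_right h1 hcoef
      _ = (1 - γ) / (2 * m - 2) := by field_simp
  refine hr.trans ?_
  rw [div_add_div _ _ (by positivity : (2 : ℝ) * m ≠ 0) (by positivity : (m : ℝ) ^ 2 ≠ 0),
    div_le_div_iff₀ hden (by positivity)]
  nlinarith [hγ, hM, sq_nonneg ((m : ℝ) - 2)]
end

section
/- If a sequence (B_m)_{m≥1} of reals ≥ 1 satisfies B_1 = 1 and B_m ≤ Γ(2 − 1/m)^{−m/(2m−2)} · B_{m−1} for all m ≥ 2, then there exists κ > 0 such that B_m ≤ κ · m^{(1−γ)/2} for all m ≥ 1, where γ is the Euler–Mascheroni constant. -/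
/-!
Since `log ∘ Γ` is convex and `(log ∘ Γ)'(2) = Γ'(2) = 1 - γ`, the tangent line at `2` gives
`Γ(2 - 1/m) ≥ exp (-(1 - γ)/m)`, so the recursion factor is at most
`exp ((1 - γ) / (2 (m - 1)))`. Iterating, `B_m ≤ exp ((1 - γ)/2 · H_{m-1})`, and
`H_n ≤ 1 + log n` turns this into `B_m ≤ exp ((1 - γ)/2) · m^{(1-γ)/2}`.
-/

open Real

lemma exp_neg_mul_le_Gamma_two_sub {t : ℝ} (ht₀ : 0 < t) (ht₂ : t < 2) :
    exp (-((1 - eulerMascheroniConstant) * t)) ≤ Gamma (2 - t) := by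
  have hderiv : HasDerivAt (fun x ↦ log (Gamma x)) (1 - eulerMascheroniConstant) 2 := by
    have hGamma := hasDerivAt_Gamma_nat 1
    norm_num at hGamma
    convert hGamma.log (by norm_num [Gamma_two]) using 1
    norm_num [Gamma_two]
    ring
  have hslope := convexOn_log_Gamma.slope_le_of_hasDerivAt (x := 2 - t) (y := 2)
    (by simp; linarith) (by simp) (by linarith) hderiv
  rw [slope_def_field, Function.comp_apply, Function.comp_apply, Gamma_two, log_one,
    sub_sub_cancel, div_le_iff₀ ht₀] at hslope
  rw [← exp_log (Gamma_pos_of_pos (by linarith : 0 < 2 - t)), exp_le_exp]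
  linarith

lemma Gamma_two_sub_inv_rpow_le_exp {m : ℝ} (hm : 1 < m) :
    Gamma (2 - 1 / m) ^ (-m / (2 * m - 2)) ≤
      exp ((1 - eulerMascheroniConstant) / 2 / (m - 1)) := by
  have hinv₀ : 0 < 1 / m := by positivity
  have hinv₁ : 1 / m < 2 := by rw [div_lt_iff₀ (by linarith)]; linarith
  have hexp : -m / (2 * m - 2) ≤ 0 := div_nonpos_of_nonpos_of_nonneg (by linarith) (by linarith)
  calc Gamma (2 - 1 / m) ^ (-m / (2 * m - 2))
      ≤ exp (-((1 - eulerMascheroniConstant) * (1 / m))) ^ (-m / (2 * m - 2)) :=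
        rpow_le_rpow_of_nonpos (exp_pos _) (exp_neg_mul_le_Gamma_two_sub hinv₀ hinv₁) hexp
    _ = exp ((1 - eulerMascheroniConstant) / 2 / (m - 1)) := by
        rw [← exp_mul]
        congr 1
        field_simp [(by linarith : m - 1 ≠ 0), (by linarith : 2 * m - 2 ≠ 0)]

lemma le_exp_mul_harmonic_mul {B : ℕ → ℝ} {c : ℝ}
    (hstep : ∀ n : ℕ, B (n + 2) ≤ exp (c / (n + 1)) * B (n + 1)) (n : ℕ) :
    B (n + 1) ≤ exp (c * harmonic n) * B 1 := by
  induction n with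
  | zero => simp
  | succ n ih =>
    calc B (n + 2) ≤ exp (c / (n + 1)) * B (n + 1) := hstep n
      _ ≤ exp (c / (n + 1)) * (exp (c * harmonic n) * B 1) :=
        mul_le_mul_of_nonneg_left ih (exp_pos _).le
      _ = exp (c * harmonic (n + 1)) * B 1 := by
        rw [← mul_assoc, ← exp_add, harmonic_succ]
        push_cast
        ring_nf

lemma exp_mul_harmonic_le {c : ℝ} (hc : 0 ≤ c) (n : ℕ) :
    exp (c * harmonic n) ≤ exp c * ((n : ℝ) + 1) ^ c := by
  have hlog : log n ≤ log (n + 1) := by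
    rcases n.eq_zero_or_pos with rfl | hn
    · simp
    · exact log_le_log (by positivity) (by linarith)
  have hharmonic : (harmonic n : ℝ) ≤ 1 + log (n + 1) := by
    linarith [harmonic_le_one_add_log n]
  calc exp (c * harmonic n) ≤ exp (c * (1 + log (n + 1))) := by gcongr
    _ = exp c * ((n : ℝ) + 1) ^ c := by
      rw [mul_add, mul_one, exp_add, rpow_def_of_pos (by positivity), mul_comm c]

/-- Abstract form of Corollary 3.2: the recursive Bohnenblust–Hille bound
implies growth of order `m^{(1-γ)/2}`. -/
theorem multilinear_bh_growth (B : ℕ → ℝ) (hB1 : ∀ m, 1 ≤ m → 1 ≤ B m)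
    (hBone : B 1 = 1)
    (hrec : ∀ m : ℕ, 2 ≤ m →
      B m ≤ Real.Gamma (2 - 1 / (m : ℝ)) ^ (-(m : ℝ) / (2 * m - 2)) * B (m - 1)) :
    ∃ κ : ℝ, 0 < κ ∧ ∀ m : ℕ, 1 ≤ m →
      B m ≤ κ * (m : ℝ) ^ ((1 - Real.eulerMascheroniConstant) / 2) := by
  set c := (1 - eulerMascheroniConstant) / 2 with hc_def
  have hc : 0 ≤ c := by rw [hc_def]; linarith [eulerMascheroniConstant_lt_two_thirds]
  have hB : ∀ n, 0 ≤ B (n + 1) := fun n ↦ zero_le_one.trans (hB1 _ n.succ_pos)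
  have hstep : ∀ n : ℕ, B (n + 2) ≤ exp (c / (n + 1)) * B (n + 1) := fun n ↦ by
    have hfactor := Gamma_two_sub_inv_rpow_le_exp (m := (n : ℝ) + 2)
      (by linarith [n.cast_nonneg (α := ℝ)])
    rw [show (n : ℝ) + 2 - 1 = n + 1 by ring] at hfactor
    have hrec_n := hrec (n + 2) (by omega)
    push_cast at hrec_n
    exact hrec_n.trans (mul_le_mul_of_nonneg_right hfactor (hB n))
  refine ⟨exp c, exp_pos c, fun m hm ↦ ?_⟩
  obtain ⟨n, rfl⟩ := Nat.exists_eq_add_of_le' hm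
  calc B (n + 1) ≤ exp (c * harmonic n) * B 1 := le_exp_mul_harmonic_mul hstep n
    _ ≤ exp c * ((n + 1 : ℕ) : ℝ) ^ c := by
      rw [hBone, mul_one]
      exact_mod_cast exp_mul_harmonic_le hc n
end

section
/- If a sequence (B_m)_{m≥1} of reals ≥ 1 satisfies B_m ≤ (1/√2)·(Γ(3/2 − 1/m)/√π)^{−m/(2m−2)} · B_{m−1} for all m sufficiently large, and B_m = o(m), then there exists κ > 0 such that B_m ≤ κ · m^{(2 − ln 2 − γ)/2} for all m ≥ 1. -/
open Real Filter

/-!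
Since `Γ` is convex it lies above its tangent at `3/2`, so
`Γ(3/2 - 1/m) ≥ (√π/2)(1 - ψ(3/2)/m)` with `ψ(3/2) = Γ'(3/2)/Γ(3/2) = 2 - 2 log 2 - γ`.
Feeding this into the recursion, the `m`-th factor is at most `exp (φ m - φ (m - 1))` for
`φ x = α log x - 1/x` and `α = (log 2 + ψ(3/2))/2`, so telescoping gives
`B m ≤ C exp (φ m) ≤ C m ^ α` for all large `m`; the finitely many remaining terms only
enlarge the constant.
-/

/-- `ψ(3/2)`, the logarithmic derivative of `Γ` at `3/2`. -/
noncomputable def digammaThreeHalves : ℝ := 2 - 2 * log 2 - eulerMascheroniConstant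

noncomputable def bhExponent : ℝ := (2 - log 2 - eulerMascheroniConstant) / 2

/-- The `-1/x` term absorbs the second-order error `ψ(3/2)² / x²` of the tangent-line estimate;
this works because `bhExponent + ψ(3/2)² ≤ 1`. -/
noncomputable def bhLogMajorant (x : ℝ) : ℝ := bhExponent * log x - 1 / x

namespace Real

theorem Gamma_three_halves : Gamma (3 / 2) = √π / 2 := by
  rw [show (3 : ℝ) / 2 = 1 / 2 + 1 by norm_num, Gamma_add_one one_half_pos.ne', Gamma_one_half_eq]
  ring

theorem hasDerivAt_Gamma_three_halves :
    HasDerivAt Gamma (√π / 2 * digammaThreeHalves) (3 / 2) := by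
  have hmul : HasDerivAt (fun s => s * Gamma s)
      (1 * Gamma (1 / 2) + 1 / 2 * (-√π * (eulerMascheroniConstant + 2 * log 2)))
      (3 / 2 - 1) := by
    norm_num only
    exact (hasDerivAt_id _).mul hasDerivAt_Gamma_one_half
  have hshift : (fun s => Gamma (s + 1)) =ᶠ[nhds (3 / 2 - 1)] fun s => s * Gamma s := by
    filter_upwards [eventually_ne_nhds (show (3 / 2 - 1 : ℝ) ≠ 0 by norm_num)] with s hs
    exact Gamma_add_one hs
  have h := (hmul.congr_of_eventuallyEq hshift).comp_sub_const (3 / 2) 1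
  simp only [sub_add_cancel] at h
  refine h.congr_deriv ?_
  rw [Gamma_one_half_eq, digammaThreeHalves]
  ring

theorem Gamma_three_halves_sub_ge {s : ℝ} (hs0 : 0 < s) (hs : s < 3 / 2) :
    √π / 2 * (1 - digammaThreeHalves * s) ≤ Gamma (3 / 2 - s) := by
  have hslope := convexOn_Gamma.slope_le_of_hasDerivAt (x := 3 / 2 - s)
    (Set.mem_Ioi.mpr (by linarith)) (Set.mem_Ioi.mpr (by norm_num)) (by linarith)
    hasDerivAt_Gamma_three_halves
  rw [slope_def_field, Gamma_three_halves, sub_sub_cancel, div_le_iff₀ hs0] at hslope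
  linarith

end Real

theorem neg_log_one_sub_le {t : ℝ} (ht : t ≤ 1 / 2) : -log (1 - t) ≤ t + 2 * t ^ 2 := by
  have hpos : 0 < 1 - t := by linarith
  have hlog := one_sub_inv_le_log_of_pos hpos
  have hrat : (1 - t)⁻¹ - 1 ≤ t + 2 * t ^ 2 := by
    rw [inv_eq_one_div, div_sub_one hpos.ne', div_le_iff₀ hpos]
    nlinarith [sq_nonneg t]
  linarith

theorem digammaThreeHalves_le : digammaThreeHalves ≤ 1 / 2 := by
  have := one_half_lt_eulerMascheroniConstant
  have := log_two_gt_d9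
  rw [digammaThreeHalves]; linarith

theorem bhExponent_nonneg : 0 ≤ bhExponent := by
  have := eulerMascheroniConstant_lt_two_thirds
  have := log_two_lt_d9
  rw [bhExponent]; linarith

theorem bhExponent_add_sq_digammaThreeHalves_le_one :
    bhExponent + digammaThreeHalves ^ 2 ≤ 1 := by
  have := one_half_lt_eulerMascheroniConstant
  have := eulerMascheroniConstant_lt_two_thirds
  have := log_two_gt_d9
  have := log_two_lt_d9
  rw [bhExponent, digammaThreeHalves]; nlinarith

theorem log_bhFactor_tangent_le {x : ℝ} (hx : 1 < x) :
    log (1 / √2 * ((1 - digammaThreeHalves / x) / 2) ^ (-x / (2 * x - 2))) ≤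
      bhExponent / (x - 1) + digammaThreeHalves ^ 2 / (x * (x - 1)) := by
  set δ := digammaThreeHalves
  have hx0 : 0 < x := by linarith
  have hx1 : 0 < x - 1 := by linarith
  have hδx : δ / x ≤ 1 / 2 := by
    rw [div_le_iff₀ hx0]; nlinarith [digammaThreeHalves_le]
  have hu := neg_log_one_sub_le hδx
  have hbase : 0 < 1 - δ / x := by linarith
  rw [log_mul (by positivity) (by positivity), log_rpow (by positivity),
    log_div hbase.ne' two_ne_zero, one_div, log_inv, log_sqrt zero_le_two]
  have hexp : 2 * bhExponent = log 2 + δ := by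
    simp only [bhExponent, δ, digammaThreeHalves]; ring
  have hrw : -(log 2 / 2) + -x / (2 * x - 2) * (log (1 - δ / x) - log 2) =
      (log 2 + x * -log (1 - δ / x)) / (2 * (x - 1)) := by
    field_simp; ring
  have hbound : (log 2 + x * (δ / x + 2 * (δ / x) ^ 2)) / (2 * (x - 1)) =
      bhExponent / (x - 1) + δ ^ 2 / (x * (x - 1)) := by
    field_simp; linear_combination (-x) * hexp
  rw [hrw, ← hbound]
  gcongr

theorem le_bhLogMajorant_sub {x : ℝ} (hx : 1 < x) :
    bhExponent / (x - 1) + digammaThreeHalves ^ 2 / (x * (x - 1)) ≤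
      bhLogMajorant x - bhLogMajorant (x - 1) := by
  have hx0 : 0 < x := by linarith
  have hx1 : 0 < x - 1 := by linarith
  have hlog : 1 / x ≤ log x - log (x - 1) := by
    have h := one_sub_inv_le_log_of_pos (div_pos hx0 hx1)
    rwa [inv_div, log_div hx0.ne' hx1.ne', one_sub_div hx0.ne', sub_sub_cancel] at h
  have hα := mul_le_mul_of_nonneg_left hlog bhExponent_nonneg
  have hkey : (bhExponent + digammaThreeHalves ^ 2) / (x * (x - 1)) ≤ 1 / (x * (x - 1)) :=
    div_le_div_of_nonneg_right bhExponent_add_sq_digammaThreeHalves_le_one (by positivity)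
  have hsplit : bhExponent / (x - 1) + digammaThreeHalves ^ 2 / (x * (x - 1)) =
      bhExponent * (1 / x) + (bhExponent + digammaThreeHalves ^ 2) / (x * (x - 1)) := by
    field_simp; ring
  have hrecip : 1 / (x * (x - 1)) = 1 / (x - 1) - 1 / x := by
    field_simp; ring
  rw [bhLogMajorant, bhLogMajorant]
  linarith

theorem bhFactor_le_exp_bhLogMajorant_sub {x : ℝ} (hx : 1 < x) :
    1 / √2 * (Gamma (3 / 2 - 1 / x) / √π) ^ (-x / (2 * x - 2)) ≤
      exp (bhLogMajorant x - bhLogMajorant (x - 1)) := by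
  have hx0 : 0 < x := by linarith
  have hinv_lt_one : 1 / x < 1 := (div_lt_one hx0).mpr hx
  have hbase : 0 < (1 - digammaThreeHalves / x) / 2 := by
    have : digammaThreeHalves / x < 1 := by
      rw [div_lt_one hx0]; linarith [digammaThreeHalves_le]
    linarith
  have hGamma : (1 - digammaThreeHalves / x) / 2 ≤ Gamma (3 / 2 - 1 / x) / √π := by
    rw [le_div_iff₀ (sqrt_pos.mpr pi_pos)]
    calc (1 - digammaThreeHalves / x) / 2 * √π
        = √π / 2 * (1 - digammaThreeHalves * (1 / x)) := by ring
      _ ≤ Gamma (3 / 2 - 1 / x) := Gamma_three_halves_sub_ge (one_div_pos.mpr hx0) (by linarith)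
  have hexp_nonpos : -x / (2 * x - 2) ≤ 0 :=
    div_nonpos_of_nonpos_of_nonneg (by linarith) (by linarith)
  calc 1 / √2 * (Gamma (3 / 2 - 1 / x) / √π) ^ (-x / (2 * x - 2))
      ≤ 1 / √2 * ((1 - digammaThreeHalves / x) / 2) ^ (-x / (2 * x - 2)) := by
        gcongr 1 / √2 * ?_
        exact rpow_le_rpow_of_nonpos hbase hGamma hexp_nonpos
    _ ≤ exp (bhLogMajorant x - bhLogMajorant (x - 1)) := by
        rw [← log_le_iff_le_exp (by positivity)]
        exact (log_bhFactor_tangent_le hx).trans (le_bhLogMajorant_sub hx)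

theorem le_mul_exp_sub_of_forall_le_exp_sub_mul {B φ : ℕ → ℝ} {N : ℕ}
    (hstep : ∀ m, N < m → B m ≤ exp (φ m - φ (m - 1)) * B (m - 1)) :
    ∀ m, N ≤ m → B m ≤ B N * exp (φ m - φ N) := by
  intro m hm
  induction m, hm using Nat.le_induction with
  | base => simp
  | succ m hm ih =>
    calc B (m + 1) ≤ exp (φ (m + 1) - φ m) * B m := hstep (m + 1) (by omega)
      _ ≤ exp (φ (m + 1) - φ m) * (B N * exp (φ m - φ N)) := by gcongr
      _ = B N * exp (φ (m + 1) - φ N) := by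
        rw [mul_left_comm, ← exp_add, sub_add_sub_cancel]

theorem exists_pos_forall_le_mul_of_eventually_le_mul {B g : ℕ → ℝ} {C : ℝ}
    (hg : ∀ m, 1 ≤ m → 1 ≤ g m) (hB : ∀ᶠ m in atTop, B m ≤ C * g m) :
    ∃ κ, 0 < κ ∧ ∀ m, 1 ≤ m → B m ≤ κ * g m := by
  obtain ⟨N, hN⟩ := eventually_atTop.mp hB
  set κ := max C 0 + ∑ k ∈ Finset.range N, |B k| + 1
  have hsum : 0 ≤ ∑ k ∈ Finset.range N, |B k| := Finset.sum_nonneg fun k _ => abs_nonneg (B k)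
  refine ⟨κ, by positivity, fun m hm => ?_⟩
  have hgm := hg m hm
  rcases le_or_gt N m with hNm | hmN
  · calc B m ≤ C * g m := hN m hNm
      _ ≤ κ * g m := by gcongr; linarith [le_max_left C 0]
  · calc B m ≤ |B m| := le_abs_self _
      _ ≤ ∑ k ∈ Finset.range N, |B k| :=
        Finset.single_le_sum (fun k _ => abs_nonneg (B k)) (Finset.mem_range.mpr hmN)
      _ ≤ κ := by linarith [le_max_right C 0]
      _ ≤ κ * g m := le_mul_of_one_le_right (by positivity) hgm

theorem exp_bhLogMajorant_le {x : ℝ} (hx : 0 < x) : exp (bhLogMajorant x) ≤ x ^ bhExponent := by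
  rw [rpow_def_of_pos hx, mul_comm, bhLogMajorant]
  gcongr
  linarith [one_div_pos.mpr hx]

theorem multilinear_bh_growth_real_general (B : ℕ → ℝ) (hB1 : ∀ m, 1 ≤ m → 1 ≤ B m)
    (hrec : ∃ M : ℕ, ∀ m : ℕ, M ≤ m →
      B m ≤ (1 / Real.sqrt 2) *
          (Real.Gamma (3 / 2 - 1 / (m : ℝ)) / Real.sqrt π) ^ (-(m : ℝ) / (2 * m - 2)) *
        B (m - 1)) :
    ∃ κ : ℝ, 0 < κ ∧ ∀ m : ℕ, 1 ≤ m →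
      B m ≤ κ * (m : ℝ) ^ ((2 - Real.log 2 - Real.eulerMascheroniConstant) / 2) := by
  obtain ⟨M, hM⟩ := hrec
  set N := max M 1
  have hstep : ∀ m, N < m →
      B m ≤ exp (bhLogMajorant m - bhLogMajorant ((m - 1 : ℕ) : ℝ)) * B (m - 1) := by
    intro m hm
    have hm1 : (1 : ℝ) < m := by exact_mod_cast (le_max_right M 1).trans_lt hm
    rw [Nat.cast_pred (by omega)]
    refine (hM m (by omega)).trans ?_
    gcongr
    · linarith [hB1 (m - 1) (by omega)]
    · exact bhFactor_le_exp_bhLogMajorant_sub hm1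
  have hgrowth := le_mul_exp_sub_of_forall_le_exp_sub_mul hstep
  refine exists_pos_forall_le_mul_of_eventually_le_mul
    (fun m hm => one_le_rpow (by exact_mod_cast hm) bhExponent_nonneg) ?_
    (C := B N / exp (bhLogMajorant N))
  filter_upwards [eventually_ge_atTop N] with m hm
  have hBN : 0 ≤ B N := by linarith [hB1 N (le_max_right M 1)]
  calc B m ≤ B N * exp (bhLogMajorant m - bhLogMajorant N) := hgrowth m hm
    _ = B N / exp (bhLogMajorant N) * exp (bhLogMajorant m) := by rw [exp_sub]; ring
    _ ≤ B N / exp (bhLogMajorant N) * (m : ℝ) ^ bhExponent := by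
      gcongr
      exact exp_bhLogMajorant_le (by exact_mod_cast (le_max_right M 1).trans hm)

/-- Abstract form of the real-case Corollary 3.3. -/
theorem multilinear_bh_growth_real (B : ℕ → ℝ) (hB1 : ∀ m, 1 ≤ m → 1 ≤ B m)
    (hrec : ∃ M : ℕ, ∀ m : ℕ, M ≤ m →
      B m ≤ (1 / Real.sqrt 2) *
          (Real.Gamma (3 / 2 - 1 / (m : ℝ)) / Real.sqrt π) ^ (-(m : ℝ) / (2 * m - 2)) *
        B (m - 1))
    (hlittleo : Tendsto (fun m : ℕ => B m / (m : ℝ)) atTop (nhds 0)) :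
    ∃ κ : ℝ, 0 < κ ∧ ∀ m : ℕ, 1 ≤ m →
      B m ≤ κ * (m : ℝ) ^ ((2 - Real.log 2 - Real.eulerMascheroniConstant) / 2) :=
  multilinear_bh_growth_real_general B hB1 hrec
end

section
/- With C(m,k) = (1 + 1/k)^{(m−k)/2} · m^m/(m−k)^{m−k} · ((m−k)!/m!)^{1/2} and k = k(m) = ⌈√m/√(log m)⌉, for every κ₂ > 1 there exists κ₁ > 0 such that C(m, k(m)) ≤ κ₁ · exp(κ₂ √(m log m)) for all m ≥ 2. -/
/-!
For `0 < k ≤ m` one has `log C(m, k) ≤ m / (2k) + (k / 2) log m + k + 1 / 2`: bound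
`log (1 + 1/k) ≤ 1/k`, estimate both factorials by Stirling, and use
`(m - k) log (m / (m - k)) ≤ k`. For `k = ⌈√(m / log m)⌉` the right-hand side is
`√(m log m) + O(log m + √(m / log m))`, and the error term is `o(√(m log m))`, so it is
absorbed into `(κ₂ - 1) √(m log m)` up to an additive constant.
-/

open Real Filter
open scoped Nat

/-- The factor `C(m, k)`. -/
noncomputable def bhFactor (m k : ℕ) : ℝ :=
  (1 + 1 / (k : ℝ)) ^ (((m : ℝ) - k) / 2) *
    ((m : ℝ) ^ (m : ℝ) / ((m : ℝ) - k) ^ ((m : ℝ) - k)) *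
    (((m - k)! : ℝ) / (m ! : ℝ)) ^ ((1 : ℝ) / 2)

-- The Stirling sequence decreases from `stirlingSeq 1 = e / √2`.
lemma log_factorial_le (n : ℕ) : log n ! ≤ n * log n - n + log n / 2 + 1 := by
  rcases n with _ | n
  · simp
  have hanti := Stirling.log_stirlingSeq'_antitone (Nat.zero_le n)
  simp only [Function.comp_apply, Stirling.stirlingSeq_one, Stirling.log_stirlingSeq_formula]
    at hanti
  have hn : (0 : ℝ) < (n + 1 : ℕ) := by positivity
  rw [log_div (exp_pos 1).ne' (by positivity), log_exp, log_sqrt (by norm_num),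
    log_mul two_ne_zero hn.ne', log_div hn.ne' (exp_pos 1).ne', log_exp] at hanti
  linarith

lemma rpow_self_eq_exp {x : ℝ} (hx : 0 ≤ x) : x ^ x = exp (x * log x) := by
  rcases hx.eq_or_lt with rfl | hx
  · simp
  · rw [rpow_def_of_pos hx, mul_comm]

lemma one_add_rpow_le_exp_mul {a y : ℝ} (ha : -1 ≤ a) (hy : 0 ≤ y) :
    (1 + a) ^ y ≤ exp (a * y) := by
  rw [exp_mul]
  exact rpow_le_rpow (by linarith) (by linarith [add_one_le_exp a]) hy

lemma mul_log_sub_log_le {s m : ℝ} (hs : 0 ≤ s) (hm : 0 < m) :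
    s * (log m - log s) ≤ m - s := by
  rcases hs.eq_or_lt with rfl | hs
  · simpa using hm.le
  have h := log_le_sub_one_of_pos (div_pos hm hs)
  rw [log_div hm.ne' hs.ne'] at h
  calc s * (log m - log s) ≤ s * (m / s - 1) := mul_le_mul_of_nonneg_left h hs.le
    _ = m - s := by field_simp

-- `k = m` has to be allowed, since `⌈√2 / √(log 2)⌉₊ = 2`; then `0 ^ 0 = 1` in the middle factor.
lemma bhFactor_le_exp {m k : ℕ} (hk : 0 < k) (hkm : k ≤ m) :
    bhFactor m k ≤ exp (m / (2 * k) + k * log m / 2 + k + 1 / 2) := by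
  set s := m - k with hs
  have hsm : (m : ℝ) - k = s := by rw [hs, Nat.cast_sub hkm]
  rw [bhFactor, hsm]
  have hk0 : (0 : ℝ) < k := by exact_mod_cast hk
  have hm0 : (0 : ℝ) < m := by exact_mod_cast hk.trans_le hkm
  have hfs : (0 : ℝ) < s ! := by positivity
  have hfm : (0 : ℝ) < m ! := by positivity
  have hA : (1 + 1 / (k : ℝ)) ^ ((s : ℝ) / 2) ≤ exp (1 / k * (s / 2)) :=
    one_add_rpow_le_exp_mul (by linarith [one_div_pos.2 hk0]) (by positivity)
  have hB : (m : ℝ) ^ (m : ℝ) / (s : ℝ) ^ (s : ℝ) = exp (m * log m - s * log s) := by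
    rw [rpow_self_eq_exp hm0.le, rpow_self_eq_exp (Nat.cast_nonneg s), exp_sub]
  have hC : ((s ! : ℝ) / m !) ^ ((1 : ℝ) / 2) = exp ((log s ! - log m !) * (1 / 2)) := by
    rw [rpow_def_of_pos (div_pos hfs hfm), log_div hfs.ne' hfm.ne']
  have hlogs : log s ≤ log m := by
    rcases s.eq_zero_or_pos with h0 | hs0
    · simpa [h0] using log_natCast_nonneg m
    · exact log_le_log (by positivity) (by linarith)
  have hsk : (1 / k : ℝ) * (s / 2) ≤ m / (2 * k) := by
    rw [div_mul_div_comm, one_mul, mul_comm]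
    gcongr
    exact Nat.sub_le m k
  have hmk : (m : ℝ) * log m = s * log m + k * log m := by rw [← add_mul, ← hsm]; ring
  have hlow := Stirling.le_log_factorial_stirling (n := m) (by omega)
  have h2pi : 0 < log (2 * π) := log_pos (by linarith [pi_gt_three])
  calc _ ≤ exp (1 / k * (s / 2)) * exp (m * log m - s * log s) *
        exp ((log s ! - log m !) * (1 / 2)) := by
        rw [hB, hC]; gcongr
    _ = exp (1 / k * (s / 2) + (m * log m - s * log s) + (log s ! - log m !) * (1 / 2)) := by
        rw [exp_add, exp_add]
    _ ≤ _ := exp_le_exp.2 <| by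
        linarith [log_factorial_le s, mul_log_sub_log_le (Nat.cast_nonneg s) hm0]

-- Taking `k ≈ √(m / L)` balances `m / (2k)` and `k L / 2`, each about `√(m L) / 2`.
lemma div_two_mul_add_mul_div_two_le {m L k : ℝ} (hm : 0 < m) (hL : 0 < L) (hk : √m / √L ≤ k)
    (hk' : k ≤ √m / √L + 1) :
    m / (2 * k) + k * L / 2 + k + 1 / 2 ≤ √(m * L) + L / 2 + √m / √L + 3 / 2 := by
  have hmx : m / (√m / √L) = √(m * L) := by
    rw [sqrt_mul hm.le]; field_simp; rw [sq_sqrt hm.le]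
  have hxL : √m / √L * L = √(m * L) := by
    rw [sqrt_mul hm.le]; field_simp; rw [sq_sqrt hL.le]
  have h1 : m / (2 * k) ≤ √(m * L) / 2 := by
    rw [← hmx, div_div, mul_comm]; gcongr
  have h2 : k * L ≤ √(m * L) + L :=
    calc k * L ≤ (√m / √L + 1) * L := by gcongr
      _ = √(m * L) + L := by rw [add_mul, hxL, one_mul]
  linarith

lemma ceil_sqrt_div_sqrt_log_le {m : ℕ} (hm : 2 ≤ m) : ⌈√m / √(log m)⌉₊ ≤ m := by
  have hm2 : (2 : ℝ) ≤ m := by exact_mod_cast hm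
  have hlog : 1 / 2 ≤ log m := by linarith [log_le_log two_pos hm2, log_two_gt_d9]
  refine Nat.ceil_le.2 ((div_le_iff₀ (sqrt_pos.2 (by linarith))).2 ?_)
  have hmL : 1 ≤ (m : ℝ) * log m := by
    linarith [mul_le_mul hm2 hlog (by norm_num) (by linarith)]
  calc √m ≤ √(m ^ 2 * log m) := sqrt_le_sqrt (by nlinarith)
    _ = m * √(log m) := by rw [sqrt_mul (sq_nonneg _), sqrt_sq (by positivity)]

lemma exists_log_add_sqrt_div_sqrt_log_le {ε : ℝ} (hε : 0 < ε) :
    ∃ c, ∀ m : ℕ, log m / 2 + √m / √(log m) ≤ c + ε * √(m * log m) := by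
  have hlarge : ∀ᶠ m : ℕ in atTop, 2 / ε ≤ log m :=
    (tendsto_log_atTop.comp tendsto_natCast_atTop_atTop).eventually_ge_atTop _
  have hsmall : ∀ᶠ m : ℕ in atTop, log m ≤ ε ^ 2 * m := by
    filter_upwards [tendsto_natCast_atTop_atTop.eventually
      (isLittleO_log_id_atTop.bound (by positivity : 0 < ε ^ 2))] with m h
    simp only [norm_eq_abs, id, Nat.abs_cast] at h
    exact (le_abs_self _).trans h
  have hev : ∀ᶠ m : ℕ in atTop, log m / 2 + √m / √(log m) - ε * √(m * log m) ≤ 0 := by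
    filter_upwards [hlarge, hsmall] with m h1 h2
    have hL : 0 < log m := lt_of_lt_of_le (by positivity) h1
    have hm : (0 : ℝ) < m := by nlinarith
    have hsL := sqrt_pos.2 hL
    have hLsq := mul_self_sqrt hL.le
    have hx : √m / √(log m) ≤ ε / 2 * (√m * √(log m)) := by
      have hεL : 2 ≤ ε * log m := by rwa [div_le_iff₀ hε, mul_comm] at h1
      rw [div_le_iff₀ hsL]
      calc √m = √m * 1 := (mul_one _).symm
        _ ≤ √m * (ε * log m / 2) := by gcongr; linarith
        _ = ε / 2 * (√m * √(log m)) * √(log m) := by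
          linear_combination (-(ε / 2) * √(m : ℝ)) * hLsq
    have hy : √(log m) ≤ ε * √m := by
      rw [← sqrt_sq hε.le, ← sqrt_mul (sq_nonneg ε)]; exact sqrt_le_sqrt h2
    rw [sqrt_mul hm.le]
    nlinarith [mul_le_mul_of_nonneg_left hy hsL.le]
  obtain ⟨c, hc⟩ := (isBoundedUnder_of_eventually_le hev).bddAbove_range
  exact ⟨c, fun m => by linarith [hc ⟨m, rfl⟩]⟩

lemma bhFactor_ceil_le_exp {m : ℕ} (hm : 2 ≤ m) :
    bhFactor m ⌈√m / √(log m)⌉₊ ≤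
      exp (√(m * log m) + log m / 2 + √m / √(log m) + 3 / 2) := by
  have hm0 : (0 : ℝ) < m := by positivity
  have hL : 0 < log m := log_pos (by exact_mod_cast hm)
  have hx : 0 < √m / √(log m) := by positivity
  refine (bhFactor_le_exp (Nat.ceil_pos.2 hx) (ceil_sqrt_div_sqrt_log_le hm)).trans ?_
  exact exp_le_exp.2 (div_two_mul_add_mul_div_two_le hm0 hL (Nat.le_ceil _)
    (Nat.ceil_lt_add_one hx.le).le)

/-- With `k(m) = ⌈√m/√(log m)⌉`, the factor `C(m, k(m))` is subexponential:
for every `κ₂ > 1` it is at most `κ₁ · exp(κ₂ √(m log m))`. -/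
theorem polynomial_bh_subexponential_factor (κ₂ : ℝ) (hκ₂ : 1 < κ₂) :
    ∃ κ₁ : ℝ, 0 < κ₁ ∧ ∀ m : ℕ, 2 ≤ m →
      ∀ k : ℕ, k = ⌈Real.sqrt m / Real.sqrt (Real.log m)⌉₊ →
        (1 + 1 / (k : ℝ)) ^ (((m : ℝ) - k) / 2) *
            ((m : ℝ) ^ (m : ℝ) / ((m : ℝ) - k) ^ ((m : ℝ) - k)) *
            (((m - k).factorial : ℝ) / (m.factorial : ℝ)) ^ ((1 : ℝ) / 2) ≤
          κ₁ * Real.exp (κ₂ * Real.sqrt (m * Real.log m)) := by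
  obtain ⟨c, hc⟩ := exists_log_add_sqrt_div_sqrt_log_le (sub_pos.2 hκ₂)
  refine ⟨exp (c + 3 / 2), exp_pos _, fun m hm k hk => ?_⟩
  calc bhFactor m k ≤ exp (√(m * log m) + log m / 2 + √m / √(log m) + 3 / 2) :=
        hk ▸ bhFactor_ceil_le_exp hm
    _ ≤ exp (c + 3 / 2 + κ₂ * √(m * log m)) := exp_le_exp.2 (by linarith [hc m])
    _ = exp (c + 3 / 2) * exp (κ₂ * √(m * log m)) := exp_add _ _
end

section
/- Let P be a polynomial in n complex variables with homogeneous expansion P = ∑_{m≥0} P_m. If sup_{z ∈ 𝔻ⁿ} |P(z)| ≤ 1, then for every m > 0, sup_{z ∈ 𝔻ⁿ} |P_m(z)| ≤ 1 − |P_0|², where P_0 = P(0). -/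
/-!
Restricted to the complex line through `z`, `P` becomes the one-variable polynomial
`p(w) = P(w z) = ∑ⱼ Pⱼ(z) wʲ`, bounded by `1` on the unit disc. Averaging `p(ζᵏ w)` over the
`m`-th roots of unity `ζᵏ` keeps only the terms of degree divisible by `m`, so it equals
`F(wᵐ)` with `F(u) = ∑ⱼ P_{mj}(z) uʲ`; hence `F` is again bounded by `1` on the disc, with
`F(0) = P(0)` and `F'(0) = Pₘ(z)`. The Schwarz–Pick inequality `|F'(0)| ≤ 1 - |F(0)|²` concludes.
-/

open Metric Set ComplexConjugate

namespace Complex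

theorem norm_sub_le_norm_one_sub_conj_mul {a w : ℂ} (ha : ‖a‖ ≤ 1) (hw : ‖w‖ ≤ 1) :
    ‖w - a‖ ≤ ‖1 - conj a * w‖ := by
  have key : normSq (1 - conj a * w) - normSq (w - a) = (1 - normSq a) * (1 - normSq w) := by
    simp only [normSq_apply, sub_re, sub_im, mul_re, mul_im, one_re, one_im, conj_re, conj_im]
    ring
  have ha' : normSq a ≤ 1 := by rw [← Complex.sq_norm]; exact pow_le_one₀ (norm_nonneg a) ha
  have hw' : normSq w ≤ 1 := by rw [← Complex.sq_norm]; exact pow_le_one₀ (norm_nonneg w) hw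
  rw [← sq_le_sq₀ (norm_nonneg _) (norm_nonneg _), Complex.sq_norm, Complex.sq_norm]
  nlinarith [mul_nonneg (sub_nonneg.mpr ha') (sub_nonneg.mpr hw')]

variable {f : ℂ → ℂ}

theorem norm_deriv_zero_le_one_sub_sq_of_norm_lt_one (hf : DifferentiableOn ℂ f (ball 0 1))
    (hmaps : MapsTo f (ball 0 1) (closedBall 0 1)) (h0 : ‖f 0‖ < 1) :
    ‖deriv f 0‖ ≤ 1 - ‖f 0‖ ^ 2 := by
  set b := f 0
  have hden : ∀ u ∈ ball (0 : ℂ) 1, 1 - conj b * f u ≠ 0 := by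
    intro u hu h
    have hlt : ‖conj b * f u‖ < 1 := by
      rw [norm_mul, norm_conj]
      exact mul_lt_one_of_nonneg_of_lt_one_left (norm_nonneg b) h0
        (mem_closedBall_zero_iff.mp (hmaps hu))
    simp [← sub_eq_zero.mp h] at hlt
  -- `f` followed by the disc automorphism sending `b` to `0`, to which Schwarz's lemma applies
  set g : ℂ → ℂ := fun u => (f u - b) / (1 - conj b * f u)
  have hg_maps : MapsTo g (ball 0 1) (closedBall (g 0) 1) := by
    intro u hu
    rw [mem_closedBall, show g 0 = 0 by simp [g, b], dist_zero_right, norm_div]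
    exact div_le_one_of_le₀ (norm_sub_le_norm_one_sub_conj_mul h0.le
      (mem_closedBall_zero_iff.mp (hmaps hu))) (norm_nonneg _)
  have hg_diff : DifferentiableOn ℂ g (ball 0 1) :=
    (hf.sub_const b).div ((differentiableOn_const 1).sub (hf.const_mul (conj b))) hden
  have hd0 : 1 - conj b * b = ((1 - ‖b‖ ^ 2 : ℝ) : ℂ) := by push_cast [conj_mul']; rfl
  have hf' : HasDerivAt f (deriv f 0) 0 :=
    (hf.differentiableAt (ball_mem_nhds 0 one_pos)).hasDerivAt
  have hg' : deriv g 0 = deriv f 0 / (1 - conj b * b) := by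
    have hne := hden 0 (mem_ball_self one_pos)
    refine ((hf'.sub_const b).fun_div ((hf'.const_mul (conj b)).const_sub 1) hne).deriv.trans ?_
    simp only [b, sub_self, zero_mul, sub_zero] at hne ⊢
    field_simp
  have hpos : 0 < 1 - ‖b‖ ^ 2 := by nlinarith [norm_nonneg b]
  have hg_le := norm_deriv_le_one_of_mapsTo_ball hg_diff hg_maps one_pos
  rwa [hg', hd0, norm_div, norm_real, Real.norm_of_nonneg hpos.le, div_le_one hpos] at hg_le

theorem norm_deriv_zero_le_one_sub_sq (hf : DifferentiableOn ℂ f (ball 0 1))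
    (hmaps : MapsTo f (ball 0 1) (closedBall 0 1)) : ‖deriv f 0‖ ≤ 1 - ‖f 0‖ ^ 2 := by
  rcases (mem_closedBall_zero_iff.mp (hmaps (mem_ball_self one_pos))).lt_or_eq with h0 | h0
  · exact norm_deriv_zero_le_one_sub_sq_of_norm_lt_one hf hmaps h0
  · have hmax : IsLocalMax (norm ∘ f) 0 :=
      Filter.eventually_of_mem (ball_mem_nhds 0 one_pos) fun u hu =>
        (mem_closedBall_zero_iff.mp (hmaps hu)).trans h0.ge
    have hconst : f =ᶠ[nhds 0] fun _ => f 0 := eventually_eq_of_isLocalMax_norm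
      (Filter.eventually_of_mem (ball_mem_nhds 0 one_pos) fun u hu =>
        hf.differentiableAt (isOpen_ball.mem_nhds hu)) hmax
    rw [hconst.deriv_eq, deriv_const, h0]
    norm_num

end Complex

open Finset Polynomial

theorem IsPrimitiveRoot.sum_pow_pow_eq_ite {R : Type*} [CommRing R] [IsDomain R] {ζ : R} {m : ℕ}
    (hζ : IsPrimitiveRoot ζ m) (j : ℕ) :
    ∑ k ∈ range m, (ζ ^ j) ^ k = if m ∣ j then (m : R) else 0 := by
  split_ifs with hj
  · simp [(hζ.pow_eq_one_iff_dvd j).mpr hj]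
  · have hne : ζ ^ j - 1 ≠ 0 := sub_ne_zero.mpr fun h => hj ((hζ.pow_eq_one_iff_dvd j).mp h)
    have hpow : (ζ ^ j) ^ m = 1 := by rw [← pow_mul, mul_comm, pow_mul, hζ.pow_eq_one, one_pow]
    refine (mul_eq_zero.mp ?_).resolve_right hne
    rw [geom_sum_mul, hpow, sub_self]

theorem IsPrimitiveRoot.sum_eval_mul_eq {R : Type*} [CommRing R] [IsDomain R] {ζ : R} {m : ℕ}
    (hζ : IsPrimitiveRoot ζ m) (hm : m ≠ 0) (p : R[X]) (w : R) :
    ∑ k ∈ range m, p.eval (ζ ^ k * w) = m * (contract m p).eval (w ^ m) := by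
  have hcomp : ∑ k ∈ range m, p.comp (C (ζ ^ k) * X) = C (m : R) * expand R m (contract m p) := by
    ext j
    simp only [finsetSum_coeff, comp_C_mul_X_coeff, ← mul_sum, coeff_C_mul,
      coeff_expand (Nat.pos_of_ne_zero hm), coeff_contract hm]
    simp_rw [← pow_mul, mul_comm _ j, pow_mul, hζ.sum_pow_pow_eq_ite j]
    split_ifs with hj
    · rw [Nat.div_mul_cancel hj, mul_comm]
    · simp
  simpa [eval_finsetSum] using congrArg (eval w) hcomp

namespace Polynomial

theorem norm_eval_contract_le_one {p : ℂ[X]} (hp : ∀ w : ℂ, ‖w‖ < 1 → ‖p.eval w‖ ≤ 1)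
    {m : ℕ} (hm : m ≠ 0) {u : ℂ} (hu : ‖u‖ < 1) : ‖(contract m p).eval u‖ ≤ 1 := by
  obtain ⟨w, rfl⟩ := IsAlgClosed.exists_pow_nat_eq u (Nat.pos_of_ne_zero hm)
  have hw : ‖w‖ < 1 := by
    rw [norm_pow] at hu
    exact (pow_lt_one_iff_of_nonneg (norm_nonneg w) hm).mp hu
  obtain ⟨ζ, hζ⟩ : ∃ ζ : ℂ, IsPrimitiveRoot ζ m := ⟨_, Complex.isPrimitiveRoot_exp m hm⟩
  have hsum : ‖∑ k ∈ range m, p.eval (ζ ^ k * w)‖ ≤ m := by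
    refine (norm_sum_le_of_le _ fun k _ => hp _ ?_).trans_eq (by simp)
    rwa [norm_mul, norm_pow, hζ.norm'_eq_one hm, one_pow, one_mul]
  rw [hζ.sum_eval_mul_eq hm, norm_mul, Complex.norm_natCast] at hsum
  exact le_of_mul_le_mul_left (by simpa using hsum) (by positivity)

theorem norm_coeff_le_one_sub_sq {p : ℂ[X]} (hp : ∀ w : ℂ, ‖w‖ < 1 → ‖p.eval w‖ ≤ 1)
    {m : ℕ} (hm : m ≠ 0) : ‖p.coeff m‖ ≤ 1 - ‖p.coeff 0‖ ^ 2 := by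
  have hmaps : MapsTo (fun u => (contract m p).eval u) (ball 0 1) (closedBall 0 1) :=
    fun u hu => mem_closedBall_zero_iff.mpr
      (norm_eval_contract_le_one hp hm (mem_ball_zero_iff.mp hu))
  have := Complex.norm_deriv_zero_le_one_sub_sq
    (contract m p).differentiable.differentiableOn hmaps
  rwa [Polynomial.deriv, ← coeff_zero_eq_eval_zero, ← coeff_zero_eq_eval_zero, coeff_derivative,
    coeff_contract hm, coeff_contract hm, zero_add, one_mul, zero_mul, Nat.cast_zero, zero_add,
    mul_one] at this

end Polynomial

namespace MvPolynomial

variable {σ R : Type*} [CommSemiring R]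

theorem eval_aeval_C_mul_X (P : MvPolynomial σ R) (z : σ → R) (w : R) :
    (aeval (fun i => Polynomial.C (z i) * Polynomial.X) P).eval w = eval (fun i => w * z i) P := by
  rw [← Polynomial.coe_evalRingHom, aeval_def, eval₂_comp_left]
  congr 1
  · ext; simp
  · funext i
    simp only [Function.comp_apply, Polynomial.coe_evalRingHom, Polynomial.eval_mul,
      Polynomial.eval_C, Polynomial.eval_X]
    exact mul_comm _ _

theorem coeff_aeval_C_mul_X (P : MvPolynomial σ R) (z : σ → R) (j : ℕ) :
    (aeval (fun i => Polynomial.C (z i) * Polynomial.X) P).coeff j =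
      eval z (homogeneousComponent j P) := by
  induction P using MvPolynomial.induction_on' with
  | monomial d c =>
    have hX : (d.prod fun _ k => (Polynomial.X : Polynomial R) ^ k) = Polynomial.X ^ d.degree :=
      Finset.prod_pow_eq_pow_sum _ _ _
    rw [homogeneousComponent_of_mem (isHomogeneous_monomial c rfl), aeval_monomial]
    simp only [mul_pow, Finsupp.prod_mul, hX, ← Polynomial.C_pow, ← map_finsuppProd,
      Polynomial.algebraMap_eq, ← mul_assoc, ← map_mul, Polynomial.coeff_C_mul_X_pow]
    split_ifs <;> simp [eval_monomial]
  | add p q hp hq => simp [hp, hq]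

end MvPolynomial

/-- F. Wiener's lemma: if `|P(z)| ≤ 1` on the open unit polydisk, then each
homogeneous part `P_m` with `m > 0` satisfies `‖P_m‖_∞ ≤ 1 - |P(0)|²`. -/
theorem wiener_lemma {n : ℕ} (P : MvPolynomial (Fin n) ℂ)
    (hP : ∀ z : Fin n → ℂ, (∀ i, ‖z i‖ < 1) →
      ‖MvPolynomial.eval z P‖ ≤ 1) :
    ∀ m : ℕ, 0 < m → ∀ z : Fin n → ℂ, (∀ i, ‖z i‖ < 1) →
      ‖MvPolynomial.eval z (MvPolynomial.homogeneousComponent m P)‖ ≤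
        1 - ‖MvPolynomial.coeff 0 P‖ ^ 2 := by
  intro m hm z hz
  have hline : ∀ w : ℂ, ‖w‖ < 1 →
      ‖(MvPolynomial.aeval (fun i => C (z i) * X) P).eval w‖ ≤ 1 := by
    intro w hw
    rw [MvPolynomial.eval_aeval_C_mul_X]
    refine hP _ fun i => ?_
    rw [norm_mul]
    exact mul_lt_one_of_nonneg_of_lt_one_left (norm_nonneg w) hw (hz i).le
  simpa [MvPolynomial.coeff_aeval_C_mul_X] using norm_coeff_le_one_sub_sq hline hm.ne'
end
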